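/- Let d ≥ 5 and let u ∈ Ḣ²(ℝ^d) satisfy ‖Δu‖_{L²} < ‖ΔW‖_{L²} and E(u) ≤ (1-δ₀) E(W) for some δ₀ > 0. Then there exists δ̄ = δ̄(δ₀, d) > 0 such that ∫|Δu|² ≤ (1-δ̄) ∫|ΔW|². -/

import Mathlib

open Real

/-!
Below the threshold `K ≤ C^{-d/2} = ‖ΔW‖₂²` the potential term is dominated by the kinetic one:
Sobolev gives `P ≤ C^{2d/(d-4)} K^{d/(d-4)} = C^{2d/(d-4)} K^{4/(d-4)} · K`, and the prefactor is
at most `1` precisely when `K ≤ C^{-d/2}`. Hence `E(u) ≥ K/2 - (d-4)/(2d) K = (2/d) K`, and comparing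
with `E(u) ≤ (1-δ₀) (2/d) ‖ΔW‖₂²` gives the claim with `δ̄ = δ₀`.
-/

section

variable {d C K P : ℝ}

theorem le_mul_rpow_of_sobolev (hd : 4 < d) (hC : 0 < C) (hK : 0 ≤ K) (hP : 0 ≤ P)
    (hSob : P ^ ((d - 4) / (2 * d)) ≤ C * K ^ ((1 : ℝ) / 2)) :
    P ≤ C ^ (2 * d / (d - 4)) * K ^ (d / (d - 4)) := by
  have hd0 : 0 < d := by linarith
  have hd4 : 0 < d - 4 := by linarith
  calc P = (P ^ ((d - 4) / (2 * d))) ^ (2 * d / (d - 4)) := by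
        rw [← rpow_mul hP, show (d - 4) / (2 * d) * (2 * d / (d - 4)) = 1 by field_simp,
          rpow_one]
    _ ≤ (C * K ^ ((1 : ℝ) / 2)) ^ (2 * d / (d - 4)) :=
        rpow_le_rpow (by positivity) hSob (by positivity)
    _ = C ^ (2 * d / (d - 4)) * K ^ (d / (d - 4)) := by
        rw [mul_rpow hC.le (by positivity), ← rpow_mul hK]
        congr 2
        field_simp

theorem mul_rpow_le_self_of_le_threshold (hd : 4 < d) (hC : 0 < C) (hK : 0 ≤ K)
    (hKW : K ≤ C ^ (-d / 2)) :
    C ^ (2 * d / (d - 4)) * K ^ (d / (d - 4)) ≤ K := by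
  have hd4 : 0 < d - 4 := by linarith
  have hsplit : K ^ (d / (d - 4)) = K * K ^ (4 / (d - 4)) := by
    rw [show d / (d - 4) = 1 + 4 / (d - 4) by field_simp; ring,
      rpow_add' hK (by positivity), rpow_one]
  have hcancel : C ^ (2 * d / (d - 4)) * (C ^ (-d / 2)) ^ (4 / (d - 4)) = 1 := by
    rw [← rpow_mul hC.le, ← rpow_add hC,
      show 2 * d / (d - 4) + -d / 2 * (4 / (d - 4)) = 0 by field_simp; ring, rpow_zero]
  calc C ^ (2 * d / (d - 4)) * K ^ (d / (d - 4))
      = K * (C ^ (2 * d / (d - 4)) * K ^ (4 / (d - 4))) := by rw [hsplit]; ring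
    _ ≤ K * (C ^ (2 * d / (d - 4)) * (C ^ (-d / 2)) ^ (4 / (d - 4))) := by
        gcongr
    _ = K := by rw [hcancel, mul_one]

theorem potential_le_kinetic (hd : 4 < d) (hC : 0 < C) (hK : 0 ≤ K) (hP : 0 ≤ P)
    (hSob : P ^ ((d - 4) / (2 * d)) ≤ C * K ^ ((1 : ℝ) / 2)) (hKW : K ≤ C ^ (-d / 2)) :
    P ≤ K :=
  (le_mul_rpow_of_sobolev hd hC hK hP hSob).trans (mul_rpow_le_self_of_le_threshold hd hC hK hKW)

theorem two_div_mul_le_energy (hd : 4 ≤ d) (hPK : P ≤ K) :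
    2 / d * K ≤ K / 2 - (d - 4) / (2 * d) * P := by
  have hd0 : 0 < d := by linarith
  have hcoef : 0 ≤ (d - 4) / (2 * d) := div_nonneg (by linarith) (by positivity)
  calc 2 / d * K = K / 2 - (d - 4) / (2 * d) * K := by field_simp; ring
    _ ≤ K / 2 - (d - 4) / (2 * d) * P := by gcongr

end

/-- `K` and `P` stand for `∫|Δu|²` and `∫|u|^{2d/(d−4)}`; `‖ΔW‖₂² = C_d^{−d/2}` and
`E(W) = (2/d) C_d^{−d/2}`. -/
theorem energy_trapping_kinetic (d : ℕ) (hd : 5 ≤ d) (Cd : ℝ) (hCd : 0 < Cd)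
    (δ₀ : ℝ) (hδ₀ : 0 < δ₀) :
    ∃ δb > (0 : ℝ), ∀ K P : ℝ, 0 ≤ K → 0 ≤ P →
      P ^ (((d : ℝ) - 4) / (2 * (d : ℝ))) ≤ Cd * K ^ ((1 : ℝ) / 2) →
      K < Cd ^ (-(d : ℝ) / 2) →
      K / 2 - ((d : ℝ) - 4) / (2 * (d : ℝ)) * P ≤
        (1 - δ₀) * (2 / (d : ℝ) * Cd ^ (-(d : ℝ) / 2)) →
      K ≤ (1 - δb) * Cd ^ (-(d : ℝ) / 2) := by
  refine ⟨δ₀, hδ₀, fun K P hK hP hSob hKW hE => ?_⟩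
  have hd4 : (4 : ℝ) < d := by exact_mod_cast hd
  have hPK := potential_le_kinetic hd4 hCd hK hP hSob hKW.le
  have hlow := two_div_mul_le_energy hd4.le hPK
  have hscaled : 2 / (d : ℝ) * K ≤ 2 / (d : ℝ) * ((1 - δ₀) * Cd ^ (-(d : ℝ) / 2)) := by
    linarith
  exact le_of_mul_le_mul_left hscaled (by positivity)
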